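/- arXiv:2009.08298 — 8 statements merged into one kernel-verified Lean document; each statement's English description precedes it below -/
import Mathlib

section
/- Let A, B be subgroups of an abelian group M such that every automorphism of A + B fixing A ∩ B pointwise maps B into B. Then the restriction map induces a group isomorphism from Aut_A(A+B) to Aut_{A∩B}(B), where Aut_S(G) denotes the group of automorphisms of G fixing the subgroup S pointwise. -/
/-!
Restriction to `B` is injective on automorphisms of `A + B` fixing `A`, and it lands in the
automorphisms of `B` fixing `A ∩ B`: the hypothesis, applied to `σ` and `σ⁻¹`, gives `σ(B) = B`.
For surjectivity, `A + B` is the pushout of `A ← A ∩ B → B`, so an automorphism `τ` of `B`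
fixing `A ∩ B` extends to `A + B` by `a + b ↦ a + τ b`, and this extension fixes `A`.
-/

instance addAutGroupOld (A : Type*) [Add A] : Group (AddAut A) where
  mul g h := AddEquiv.trans h g
  one := AddEquiv.refl _
  inv := AddEquiv.symm
  mul_assoc _ _ _ := rfl
  one_mul _ := rfl
  mul_one _ := rfl
  inv_mul_cancel := AddEquiv.self_trans_symm

/-- The subgroup of `AddAut G` consisting of automorphisms fixing the set `P` pointwise. -/
def fixingAutSubgroup (G : Type*) [AddCommGroup G] (P : Set G) : Subgroup (AddAut G) where
  carrier := {σ | ∀ x ∈ P, σ x = x}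
  one_mem' := fun _ _ => rfl
  mul_mem' := by
    intro a b ha hb x hx
    show a (b x) = x
    rw [hb x hx, ha x hx]
  inv_mem' := by
    intro a ha x hx
    show a.symm x = x
    conv_lhs => rw [← ha x hx]
    exact a.symm_apply_apply x

namespace AddSubgroup

variable {M : Type*} [AddCommGroup M]

section Restrict

variable {K H : AddSubgroup M}

variable (K H) in
def addAutStabilizer : Subgroup (AddAut K) where
  carrier := {σ | ∀ x : K, ((σ x : K) : M) ∈ H ↔ (x : M) ∈ H}
  one_mem' _ := Iff.rfl
  mul_mem' hσ hτ x := (hσ _).trans (hτ x)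
  inv_mem' {σ} hσ x := by
    change ((σ.symm x : K) : M) ∈ H ↔ _
    simpa using (hσ (σ.symm x)).symm

def restrictAddAut (hHK : H ≤ K) : K.addAutStabilizer H →* AddAut H :=
  MonoidHom.mk' (fun σ =>
    { toFun h := ⟨(σ.1 (inclusion hHK h) : M), (σ.2 _).2 h.2⟩
      invFun h := ⟨(σ.1.symm (inclusion hHK h) : M), ((σ⁻¹).2 _).2 h.2⟩
      left_inv h := Subtype.ext (congrArg Subtype.val (σ.1.symm_apply_apply (inclusion hHK h)) :)
      right_inv h := Subtype.ext (congrArg Subtype.val (σ.1.apply_symm_apply (inclusion hHK h)) :)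
      map_add' h h' := by ext; simp })
    (fun _ _ => rfl)

@[simp] lemma coe_restrictAddAut_apply (hHK : H ≤ K) (σ : K.addAutStabilizer H) (h : H) :
    ((restrictAddAut hHK σ h : H) : M) = (σ.1 (inclusion hHK h) : M) := rfl

end Restrict

section Sup

variable {A B : AddSubgroup M} {N : Type*} [AddCommGroup N]

variable (A B) in
def prodToSup : A × B →+ ↥(A ⊔ B) :=
  (inclusion le_sup_left).coprod (inclusion le_sup_right)

lemma prodToSup_surjective : Function.Surjective (prodToSup A B) := by
  rintro ⟨x, hx⟩
  obtain ⟨a, ha, b, hb, rfl⟩ := mem_sup.mp hx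
  exact ⟨(⟨a, ha⟩, ⟨b, hb⟩), rfl⟩

lemma sup_addMonoidHom_ext {f g : ↥(A ⊔ B) →+ N}
    (hA : ∀ a : A, f (inclusion le_sup_left a) = g (inclusion le_sup_left a))
    (hB : ∀ b : B, f (inclusion le_sup_right b) = g (inclusion le_sup_right b)) : f = g := by
  refine (AddMonoidHom.cancel_right prodToSup_surjective).mp (AddMonoidHom.ext ?_)
  rintro ⟨a, b⟩
  simp [prodToSup, hA, hB]

noncomputable def supLift (f : A →+ N) (g : B →+ N)
    (hfg : ∀ x (hA : x ∈ A) (hB : x ∈ B), f ⟨x, hA⟩ = g ⟨x, hB⟩) : ↥(A ⊔ B) →+ N :=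
  (prodToSup A B).liftOfSurjective prodToSup_surjective ⟨f.coprod g, by
    rintro ⟨a, b⟩ hab
    have hab' : (a : M) + b = 0 := congrArg Subtype.val hab
    have hbA : (b : M) ∈ A := by
      rw [eq_neg_of_add_eq_zero_right hab']
      exact neg_mem a.2
    have hsum : a + ⟨b, hbA⟩ = 0 := Subtype.ext hab'
    change f a + g b = 0
    rw [← hfg b hbA b.2, ← map_add, hsum, map_zero]⟩

lemma supLift_prodToSup (f : A →+ N) (g : B →+ N) (hfg) (p : A × B) :
    supLift f g hfg (prodToSup A B p) = f p.1 + g p.2 :=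
  (prodToSup A B).liftOfRightInverse_comp_apply _ _ _ p

@[simp] lemma supLift_inclusion_left (f : A →+ N) (g : B →+ N) (hfg) (a : A) :
    supLift f g hfg (inclusion le_sup_left a) = f a := by
  simpa [prodToSup] using supLift_prodToSup f g hfg (a, 0)

@[simp] lemma supLift_inclusion_right (f : A →+ N) (g : B →+ N) (hfg) (b : B) :
    supLift f g hfg (inclusion le_sup_right b) = g b := by
  simpa [prodToSup] using supLift_prodToSup f g hfg (0, b)

lemma addAut_sup_ext {σ τ : AddAut ↥(A ⊔ B)}
    (hA : ∀ a : A, σ (inclusion le_sup_left a) = τ (inclusion le_sup_left a))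
    (hB : ∀ b : B, σ (inclusion le_sup_right b) = τ (inclusion le_sup_right b)) : σ = τ :=
  AddEquiv.toAddMonoidHom_injective (sup_addMonoidHom_ext hA hB)

noncomputable def extendAddMonoidHom (τ : B →+ B) (hτ : ∀ b : B, (b : M) ∈ A → τ b = b) :
    ↥(A ⊔ B) →+ ↥(A ⊔ B) :=
  supLift (inclusion le_sup_left) ((inclusion le_sup_right).comp τ) fun x hA hB => by
    rw [AddMonoidHom.comp_apply, hτ ⟨x, hB⟩ hA]
    rfl

@[simp] lemma extendAddMonoidHom_inclusion_left (τ : B →+ B)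
    (hτ : ∀ b : B, (b : M) ∈ A → τ b = b) (a : A) :
    extendAddMonoidHom τ hτ (inclusion le_sup_left a) = inclusion le_sup_left a :=
  supLift_inclusion_left _ _ _ a

@[simp] lemma extendAddMonoidHom_inclusion_right (τ : B →+ B)
    (hτ : ∀ b : B, (b : M) ∈ A → τ b = b) (b : B) :
    extendAddMonoidHom τ hτ (inclusion le_sup_right b) = inclusion le_sup_right (τ b) :=
  supLift_inclusion_right _ _ _ b

noncomputable def extendAddAut (τ : AddAut B) (hτ : ∀ b : B, (b : M) ∈ A → τ b = b) :
    AddAut ↥(A ⊔ B) :=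
  have hτ' : ∀ b : B, (b : M) ∈ A → τ.symm b = b := fun b hb => by
    rw [AddEquiv.symm_apply_eq, hτ b hb]
  AddMonoidHom.toAddEquiv (extendAddMonoidHom τ.toAddMonoidHom hτ)
    (extendAddMonoidHom τ.symm.toAddMonoidHom hτ')
    (sup_addMonoidHom_ext (by simp) (by simp)) (sup_addMonoidHom_ext (by simp) (by simp))

@[simp] lemma extendAddAut_inclusion_left (τ : AddAut B)
    (hτ : ∀ b : B, (b : M) ∈ A → τ b = b) (a : A) :
    extendAddAut τ hτ (inclusion le_sup_left a) = inclusion le_sup_left a :=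
  extendAddMonoidHom_inclusion_left _ hτ a

@[simp] lemma extendAddAut_inclusion_right (τ : AddAut B)
    (hτ : ∀ b : B, (b : M) ∈ A → τ b = b) (b : B) :
    extendAddAut τ hτ (inclusion le_sup_right b) = inclusion le_sup_right (τ b) :=
  extendAddMonoidHom_inclusion_right _ hτ b

lemma fixingAutSubgroup_le_addAutStabilizer
    (hnorm : ∀ σ : AddAut ↥(A ⊔ B), (∀ x : ↥(A ⊔ B), (x : M) ∈ A ⊓ B → σ x = x) →
      ∀ x : ↥(A ⊔ B), (x : M) ∈ B → ((σ x : ↥(A ⊔ B)) : M) ∈ B) :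
    fixingAutSubgroup ↥(A ⊔ B) {x | (x : M) ∈ A} ≤ (A ⊔ B).addAutStabilizer B := by
  intro σ hσ x
  refine ⟨fun hσx => ?_, hnorm σ (fun y hy => hσ y hy.1) x⟩
  have hσinv := inv_mem hσ
  simpa only [show σ⁻¹ (σ x) = x from σ.symm_apply_apply x] using
    hnorm σ⁻¹ (fun y hy => hσinv y hy.1) (σ x) hσx

end Sup

end AddSubgroup

open AddSubgroup in
/-- If every automorphism of `A ⊔ B` fixing `A ⊓ B` pointwise maps `B`
into `B`, then restriction induces a group isomorphism
`Aut_A(A + B) ≃ Aut_{A ∩ B}(B)`. -/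
theorem stmt1 {M : Type*} [AddCommGroup M] (A B : AddSubgroup M)
    (hnorm : ∀ σ : AddAut ↥(A ⊔ B), (∀ x : ↥(A ⊔ B), (x : M) ∈ A ⊓ B → σ x = x) →
      ∀ x : ↥(A ⊔ B), (x : M) ∈ B → ((σ x : ↥(A ⊔ B)) : M) ∈ B) :
    ∃ e : fixingAutSubgroup ↥(A ⊔ B) {x : ↥(A ⊔ B) | (x : M) ∈ A} ≃*
          fixingAutSubgroup ↥B {x : ↥B | (x : M) ∈ A ⊓ B},
      ∀ (σ : fixingAutSubgroup ↥(A ⊔ B) {x : ↥(A ⊔ B) | (x : M) ∈ A})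
        (x : M) (hxB : x ∈ B),
        (((e σ : AddAut ↥B) ⟨x, hxB⟩ : ↥B) : M) =
        (((σ : AddAut ↥(A ⊔ B)) ⟨x, AddSubgroup.mem_sup_right hxB⟩ : ↥(A ⊔ B)) : M) := by
  have hstab := fixingAutSubgroup_le_addAutStabilizer hnorm
  have hfix : ∀ σ, restrictAddAut le_sup_right (Subgroup.inclusion hstab σ) ∈
      fixingAutSubgroup ↥B {x : ↥B | (x : M) ∈ A ⊓ B} := fun σ b hb =>
    Subtype.ext (congrArg Subtype.val (σ.2 (inclusion le_sup_right b) hb.1) :)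
  let ρ := ((restrictAddAut le_sup_right).comp (Subgroup.inclusion hstab)).codRestrict _ hfix
  refine ⟨MulEquiv.ofBijective ρ ⟨fun σ τ hστ => ?_, fun τ => ?_⟩, fun σ x hxB => rfl⟩
  · refine Subtype.ext (addAut_sup_ext (fun a => ?_) (fun b => ?_))
    · rw [σ.2 _ a.2, τ.2 _ a.2]
    · exact Subtype.ext (congrArg (fun υ : fixingAutSubgroup _ _ => ((υ.1 b : B) : M)) hστ)
  · refine ⟨⟨extendAddAut τ.1 fun b hb => τ.2 b ⟨hb, b.2⟩, fun x hx => ?_⟩, ?_⟩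
    · exact extendAddAut_inclusion_left τ.1 _ ⟨x, hx⟩
    · ext b
      simp [ρ]
end

section
/- Let B and C be s-extensions of a finitely generated abelian group A, and let φ : B → C be a group homomorphism restricting to the identity on A. Then the kernel of φ is contained in the torsion subgroup of B. Moreover, if the restriction of φ to B[ℓ] is injective for every prime ℓ, then φ is injective. -/
/-! Write `b` for an element of `ker φ`. Some positive multiple `n • b` lies in `A`, and
there `φ` is the injective map `A → C`, so `n • b = 0`. If moreover `b ≠ 0`, it has finite
order `n > 1`; for a prime `ℓ ∣ n` the element `(n / ℓ) • b` of `ker φ` has order `ℓ`,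
contradicting injectivity of `φ` on `B[ℓ]`. -/

lemma IsOfFinAddOrder.exists_prime_addOrderOf_nsmul {B : Type*} [AddMonoid B] {b : B}
    (hb : IsOfFinAddOrder b) (hb0 : b ≠ 0) :
    ∃ ℓ m : ℕ, ℓ.Prime ∧ addOrderOf (m • b) = ℓ := by
  have hn1 : addOrderOf b ≠ 1 := fun h => hb0 (AddMonoid.addOrderOf_eq_one_iff.mp h)
  obtain ⟨ℓ, hℓ, hℓn⟩ := Nat.exists_prime_and_dvd hn1
  have hn0 := hb.addOrderOf_pos.ne'
  refine ⟨ℓ, addOrderOf b / ℓ, hℓ, ?_⟩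
  rw [addOrderOf_nsmul_of_dvd ((Nat.div_ne_zero_iff_of_dvd hℓn).mpr ⟨hn0, hℓ.ne_zero⟩)
    (Nat.div_dvd_of_dvd hℓn), Nat.div_div_self hℓn hn0]

lemma AddMonoidHom.isOfFinAddOrder_of_map_eq_zero {B C : Type*} [AddMonoid B] [AddMonoid C]
    (H : AddSubmonoid B) (htors : ∀ b : B, ∃ n : ℕ, 0 < n ∧ n • b ∈ H) (φ : B →+ C)
    (hφH : ∀ h ∈ H, φ h = 0 → h = 0) {b : B} (hb : φ b = 0) : IsOfFinAddOrder b := by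
  obtain ⟨n, hn, hnb⟩ := htors b
  have hφnb : φ (n • b) = 0 := by rw [map_nsmul, hb, smul_zero]
  exact isOfFinAddOrder_iff_nsmul_eq_zero.mpr ⟨n, hn, hφH _ hnb hφnb⟩

lemma AddMonoidHom.injective_of_torsion_ker {B C : Type*} [AddGroup B] [AddGroup C]
    (φ : B →+ C) (hker : ∀ b : B, φ b = 0 → IsOfFinAddOrder b)
    (hprime : ∀ ℓ : ℕ, ℓ.Prime → ∀ b : B, ℓ • b = 0 → φ b = 0 → b = 0) :
    Function.Injective φ := by
  refine (injective_iff_map_eq_zero φ).mpr fun b hb => ?_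
  by_contra hb0
  obtain ⟨ℓ, m, hℓ, hord⟩ := (hker b hb).exists_prime_addOrderOf_nsmul hb0
  have hc : m • b = 0 :=
    hprime ℓ hℓ _ (hord ▸ addOrderOf_nsmul_eq_zero _) (by rw [map_nsmul, hb, smul_zero])
  rw [hc, addOrderOf_zero] at hord
  exact hℓ.one_lt.ne hord

theorem stmt5_general {A B C : Type*} [AddCommGroup A] [AddCommGroup B] [AddCommGroup C]
    (ιB : A →+ B) (ιC : A →+ C)
    (hιC : Function.Injective ιC)
    (htorsB : ∀ b : B, ∃ n : ℕ, 0 < n ∧ n • b ∈ ιB.range)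
    (φ : B →+ C) (hφ : ∀ a : A, φ (ιB a) = ιC a) :
    (∀ b : B, φ b = 0 → IsOfFinAddOrder b) ∧
    ((∀ ℓ : ℕ, ℓ.Prime → ∀ b : B, ℓ • b = 0 → φ b = 0 → b = 0) →
      Function.Injective φ) := by
  have hφA : ∀ h ∈ ιB.range, φ h = 0 → h = 0 := by
    rintro _ ⟨a, rfl⟩ h
    rw [hφ, ← map_zero ιC] at h
    rw [hιC h, map_zero]
  have hker : ∀ b : B, φ b = 0 → IsOfFinAddOrder b := fun _ =>
    φ.isOfFinAddOrder_of_map_eq_zero ιB.range.toAddSubmonoid htorsB hφA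
  exact ⟨hker, φ.injective_of_torsion_ker hker⟩

/-- Let `B`, `C` be `s`-extensions of a finitely generated abelian
group `A` and `φ : B →+ C` a homomorphism restricting to the identity on `A`. Then
`ker φ` is contained in the torsion subgroup of `B`; moreover if `φ` is injective on
`B[ℓ]` for every prime `ℓ`, then `φ` is injective. -/
theorem stmt5 {A B C : Type*} [AddCommGroup A] [AddCommGroup B] [AddCommGroup C]
    (s : ℕ) (hA : AddGroup.FG A)
    (ιB : A →+ B) (ιC : A →+ C)
    (hιB : Function.Injective ιB) (hιC : Function.Injective ιC)
    (htorsB : ∀ b : B, ∃ n : ℕ, 0 < n ∧ n • b ∈ ιB.range)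
    (htorsC : ∀ c : C, ∃ n : ℕ, 0 < n ∧ n • c ∈ ιC.range)
    (hembB : ∃ f : ↥(AddCommGroup.torsion B) →+ (Fin s → AddCircle (1 : ℚ)),
      Function.Injective f)
    (hembC : ∃ f : ↥(AddCommGroup.torsion C) →+ (Fin s → AddCircle (1 : ℚ)),
      Function.Injective f)
    (φ : B →+ C) (hφ : ∀ a : A, φ (ιB a) = ιC a) :
    (∀ b : B, φ b = 0 → IsOfFinAddOrder b) ∧
    ((∀ ℓ : ℕ, ℓ.Prime → ∀ b : B, ℓ • b = 0 → φ b = 0 → b = 0) →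
      Function.Injective φ) :=
  stmt5_general ιB ιC hιC htorsB φ hφ
end

section
/- Let B be an s-extension of a finitely generated abelian group A, and let C ⊆ B be a subgroup such that every group homomorphism C → B restricting to the identity on A ∩ C has image contained in C. Then: (a) every automorphism of A + C fixing A ∩ C pointwise maps C to itself, and (b) every automorphism of B fixing A pointwise maps A + C to itself. -/
/-! Both parts come from applying the hypothesis on `C` to the restriction of the automorphism
to `C`: in (a) this restriction fixes `A ⊓ C`, and in (b) it fixes `A`, so that
`σ (a + c) = a + σ c` with `σ c ∈ C`. -/

namespace AddSubgroup

variable {B : Type*} [AddCommGroup B]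

def IsHomStable (A C : AddSubgroup B) : Prop :=
  ∀ f : C →+ B, (∀ x : C, (x : B) ∈ A → f x = x) → ∀ x : C, f x ∈ C

namespace IsHomStable

variable {A C : AddSubgroup B}

theorem map_mem {D : AddSubgroup B} (hC : IsHomStable A C) (hCD : C ≤ D) (g : D →+ B)
    (hg : ∀ x : D, (x : B) ∈ A ⊓ C → g x = x) {x : D} (hx : (x : B) ∈ C) : g x ∈ C :=
  hC (g.comp (inclusion hCD)) (fun y hy => hg (inclusion hCD y) ⟨hy, y.2⟩) ⟨x, hx⟩

theorem map_mem_sup (hC : IsHomStable A C) (g : B →+ B) (hg : ∀ a ∈ A, g a = a) {x : B}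
    (hx : x ∈ A ⊔ C) : g x ∈ A ⊔ C := by
  obtain ⟨a, ha, c, hc, rfl⟩ := mem_sup.mp hx
  have hgc : g c ∈ C := hC (g.comp C.subtype) (fun y hy => hg y hy) ⟨c, hc⟩
  rw [map_add, hg a ha]
  exact add_mem_sup ha hgc

end IsHomStable

end AddSubgroup

theorem stmt7_general {B : Type*} [AddCommGroup B] (A C : AddSubgroup B)
    (hC : ∀ f : ↥C →+ B, (∀ x : ↥C, (x : B) ∈ A → f x = (x : B)) → ∀ x : ↥C, f x ∈ C) :
    (∀ σ : AddAut ↥(A ⊔ C), (∀ x : ↥(A ⊔ C), (x : B) ∈ A ⊓ C → σ x = x) →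
      ∀ x : ↥(A ⊔ C), (x : B) ∈ C → ((σ x : ↥(A ⊔ C)) : B) ∈ C) ∧
    (∀ σ : AddAut B, (∀ a ∈ A, σ a = a) → ∀ x ∈ A ⊔ C, σ x ∈ A ⊔ C) := by
  have hC : AddSubgroup.IsHomStable A C := hC
  refine ⟨fun σ hσ x hx => ?_, fun σ hσ x hx => hC.map_mem_sup σ.toAddMonoidHom hσ hx⟩
  exact hC.map_mem le_sup_right ((A ⊔ C).subtype.comp σ.toAddMonoidHom)
    (fun y hy => congrArg Subtype.val (hσ y hy)) hx

/-- Let `B` be an `s`-extension of a finitely generated subgroup `A`,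
and `C ≤ B` a subgroup such that every homomorphism `C →+ B` restricting to the identity
on `A ⊓ C` has image contained in `C`. Then (a) every automorphism of `A ⊔ C` fixing
`A ⊓ C` pointwise maps `C` to itself, and (b) every automorphism of `B` fixing `A`
pointwise maps `A ⊔ C` to itself. -/
theorem stmt7 {B : Type*} [AddCommGroup B] (s : ℕ) (A C : AddSubgroup B)
    (hfg : AddGroup.FG ↥A)
    (htors : ∀ b : B, ∃ n : ℕ, 0 < n ∧ n • b ∈ A)
    (hemb : ∃ f : ↥(AddCommGroup.torsion B) →+ (Fin s → AddCircle (1 : ℚ)),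
      Function.Injective f)
    (hC : ∀ f : ↥C →+ B, (∀ x : ↥C, (x : B) ∈ A → f x = (x : B)) → ∀ x : ↥C, f x ∈ C) :
    (∀ σ : AddAut ↥(A ⊔ C), (∀ x : ↥(A ⊔ C), (x : B) ∈ A ⊓ C → σ x = x) →
      ∀ x : ↥(A ⊔ C), (x : B) ∈ C → ((σ x : ↥(A ⊔ C)) : B) ∈ C) ∧
    (∀ σ : AddAut B, (∀ a ∈ A, σ a = a) → ∀ x ∈ A ⊔ C, σ x ∈ A ⊔ C) :=
  stmt7_general A C hC
end

section
/- Let B be an s-extension of a finitely generated abelian group A. There is a canonical group isomorphism Aut_{A+B_tors}(B) ≅ Hom(B/(A+B_tors), B_tors), sending an automorphism σ of B fixing A + B_tors pointwise to the homomorphism [b] ↦ σ(b) − b. -/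
/-!
An automorphism `σ` fixing `T ⊇ B_tors` moves every `b` by a torsion element: if `n • b ∈ T`
then `n • (σ b - b) = σ (n • b) - n • b = 0`. The displacement `b ↦ σ b - b` is additive and
vanishes on `T`, so it factors through `B ⧸ T`. Conversely `f` gives the automorphism `b ↦ b + f [b]`,
whose inverse is `b ↦ b - f [b]` since `f` takes values in `T`. Displacements add under composition
because `σ` fixes the torsion displacement of `τ`.
-/

open QuotientAddGroup AddCommGroup

section

variable {B : Type*} [AddCommGroup B] {T : AddSubgroup B}

theorem isAddTorsion_quotient_of_nsmul_mem (h : ∀ b : B, ∃ n : ℕ, 0 < n ∧ n • b ∈ T) :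
    IsAddTorsion (B ⧸ T) := by
  refine mk_surjective.forall.2 fun b => ?_
  obtain ⟨n, hn, hnb⟩ := h b
  exact isOfFinAddOrder_iff_nsmul_eq_zero.2 ⟨n, hn, by rwa [← mk_nsmul, eq_zero_iff]⟩

namespace fixingAutSubgroup

theorem apply_sub_self_mem_torsion (hT : IsAddTorsion (B ⧸ T)) {σ : AddAut B}
    (hσ : σ ∈ fixingAutSubgroup B T) (b : B) : σ b - b ∈ torsion B := by
  obtain ⟨n, hn, hnb⟩ := isOfFinAddOrder_iff_nsmul_eq_zero.1 (hT (b : B ⧸ T))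
  have hnbT : n • b ∈ T := by rwa [← mk_nsmul, eq_zero_iff] at hnb
  refine isOfFinAddOrder_iff_nsmul_eq_zero.2 ⟨n, hn, ?_⟩
  rw [smul_sub, ← map_nsmul, hσ _ hnbT, sub_self]

def displacement (hT : IsAddTorsion (B ⧸ T)) (σ : fixingAutSubgroup B T) :
    B ⧸ T →+ torsion B :=
  QuotientAddGroup.lift T
    { toFun := fun b => ⟨(σ : AddAut B) b - b, apply_sub_self_mem_torsion hT σ.2 b⟩
      map_zero' := by ext; simp
      map_add' := fun x y => by ext; simp only [map_add, AddSubgroup.coe_add]; abel }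
    (fun x hx => by ext; simp [σ.2 x hx])

theorem mk_add_torsion (hC : torsion B ≤ T) (b : B) (t : torsion B) :
    ((b + t : B) : B ⧸ T) = b := by
  rw [mk_add, (eq_zero_iff _).2 (hC t.2), add_zero]

@[simp]
theorem coe_displacement_mk (hT : IsAddTorsion (B ⧸ T)) (σ : fixingAutSubgroup B T)
    (b : B) : (displacement hT σ b : B) = (σ : AddAut B) b - b :=
  rfl

def ofHom (hC : torsion B ≤ T) (f : B ⧸ T →+ torsion B) : AddAut B where
  toFun b := b + f b
  invFun b := b - f b
  left_inv b := by
    simp only [mk_add_torsion hC, add_sub_cancel_right]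
  right_inv b := by
    show b - f b + f ((b - f b : B) : B ⧸ T) = b
    rw [sub_eq_add_neg, ← AddSubgroup.coe_neg, mk_add_torsion hC, AddSubgroup.coe_neg,
      neg_add_cancel_right]
  map_add' x y := by simp only [mk_add, map_add, AddSubgroup.coe_add]; abel

theorem ofHom_mem (hC : torsion B ≤ T) (f : B ⧸ T →+ torsion B) :
    ofHom hC f ∈ fixingAutSubgroup B T := fun x hx => by
  simp [ofHom, (eq_zero_iff x).2 hx]

theorem mul_apply_sub_self (hC : torsion B ≤ T) (hT : IsAddTorsion (B ⧸ T))
    (σ τ : fixingAutSubgroup B T) (b : B) :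
    ((σ * τ : fixingAutSubgroup B T) : AddAut B) b - b =
      ((σ : AddAut B) b - b) + ((τ : AddAut B) b - b) := by
  have hστ : ((σ * τ : fixingAutSubgroup B T) : AddAut B) b =
      (σ : AddAut B) (b + ((τ : AddAut B) b - b)) := by
    rw [add_sub_cancel]; rfl
  rw [hστ, map_add, σ.2 _ (hC (apply_sub_self_mem_torsion hT τ.2 b))]
  abel

def equivHom (hC : torsion B ≤ T) (hT : IsAddTorsion (B ⧸ T)) :
    fixingAutSubgroup B T ≃* Multiplicative (B ⧸ T →+ torsion B) where
  toFun σ := .ofAdd (displacement hT σ)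
  invFun f := ⟨ofHom hC f.toAdd, ofHom_mem hC f.toAdd⟩
  left_inv σ := by ext b; simp [ofHom]
  right_inv f := by
    refine Multiplicative.toAdd.injective ?_
    ext b
    simp [ofHom]
  map_mul' σ τ := by
    refine Multiplicative.toAdd.injective ?_
    ext b
    exact mul_apply_sub_self hC hT σ τ b

end fixingAutSubgroup

end

theorem stmt9_general {B : Type*} [AddCommGroup B] (A : AddSubgroup B)
    (htors : ∀ b : B, ∃ n : ℕ, 0 < n ∧ n • b ∈ A) :
    ∃ e : ↥(fixingAutSubgroup B ((A ⊔ AddCommGroup.torsion B : AddSubgroup B) : Set B)) ≃*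
        Multiplicative ((B ⧸ (A ⊔ AddCommGroup.torsion B : AddSubgroup B)) →+
          ↥(AddCommGroup.torsion B)),
      ∀ (σ : fixingAutSubgroup B ((A ⊔ AddCommGroup.torsion B : AddSubgroup B) : Set B))
        (b : B),
        (((Multiplicative.toAdd (e σ)) (QuotientAddGroup.mk b) :
            ↥(AddCommGroup.torsion B)) : B) = (σ : AddAut B) b - b := by
  refine ⟨fixingAutSubgroup.equivHom le_sup_right (isAddTorsion_quotient_of_nsmul_mem fun b => ?_),
    fun _ _ => rfl⟩
  obtain ⟨n, hn, hnb⟩ := htors b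
  exact ⟨n, hn, le_sup_left (a := A) hnb⟩

/-- Let `B` be an `s`-extension of a finitely generated subgroup `A`.
There is a canonical group isomorphism
`Aut_{A + B_tors}(B) ≅ Hom(B/(A + B_tors), B_tors)`
sending an automorphism `σ` fixing `A + B_tors` pointwise to `[b] ↦ σ b - b`. -/
theorem stmt9 {B : Type*} [AddCommGroup B] (s : ℕ) (A : AddSubgroup B)
    (hfg : AddGroup.FG ↥A)
    (htors : ∀ b : B, ∃ n : ℕ, 0 < n ∧ n • b ∈ A)
    (hemb : ∃ f : ↥(AddCommGroup.torsion B) →+ (Fin s → AddCircle (1 : ℚ)),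
      Function.Injective f) :
    ∃ e : ↥(fixingAutSubgroup B ((A ⊔ AddCommGroup.torsion B : AddSubgroup B) : Set B)) ≃*
        Multiplicative ((B ⧸ (A ⊔ AddCommGroup.torsion B : AddSubgroup B)) →+
          ↥(AddCommGroup.torsion B)),
      ∀ (σ : fixingAutSubgroup B ((A ⊔ AddCommGroup.torsion B : AddSubgroup B) : Set B))
        (b : B),
        (((Multiplicative.toAdd (e σ)) (QuotientAddGroup.mk b) :
            ↥(AddCommGroup.torsion B)) : B) = (σ : AddAut B) b - b :=
  stmt9_general A htors
end

section
/- Let B be an s-extension of a finitely generated abelian group A such that B/A has finite exponent. Then the group Aut_A(B) of automorphisms of B fixing A pointwise is finite. -/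
/-!
Let `T` be the torsion subgroup of `B` and `n • B ⊆ A`. An automorphism `σ` fixing `A` satisfies
`n • (σ b - b) = σ (n • b) - n • b = 0`, so `σ ↦ σ - id` embeds `Aut_A(B)` into the homomorphisms
`B → T` vanishing on `A`. Such a homomorphism is determined by its values on `T` and on
representatives of `B / (A + T)`, and both of these groups are finite: multiplication by `n` maps
`T` into the finite torsion of `A` with kernel the `n`-torsion, which embeds into that of
`(ℚ/ℤ)^s`; and `b ↦ n • b` induces a map `B → A / nA` into a finite group with kernel in `A + T`.
-/

open AddCommGroup

theorem AddCommGroup.finite_torsion_of_fg (A : Type*) [AddCommGroup A] [AddGroup.FG A] :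
    Finite (torsion A) := by
  have : Module.Finite ℤ A := Module.Finite.iff_addGroup_fg.mpr ‹_›
  have : AddGroup.FG (torsion A) :=
    Module.Finite.iff_addGroup_fg.mp (inferInstance : Module.Finite ℤ (torsion A).toIntSubmodule)
  exact finite_of_fg_isAddTorsion _ AddCommMonoid.addTorsion.isAddTorsion

theorem Set.finite_setOf_nsmul_eq_zero_of_injective {G H : Type*} [AddMonoid G] [AddMonoid H]
    {f : G →+ H} (hf : Function.Injective f) {n : ℕ} (hH : {y : H | n • y = 0}.Finite) :
    {x : G | n • x = 0}.Finite :=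
  (hH.preimage hf.injOn).subset fun x (hx : n • x = 0) => by
    simp [← map_nsmul, hx]

theorem Set.finite_setOf_nsmul_eq_zero_pi {ι : Type*} [Finite ι] {G : ι → Type*}
    [∀ i, AddMonoid (G i)] {n : ℕ} (hG : ∀ i, {y : G i | n • y = 0}.Finite) :
    {x : ∀ i, G i | n • x = 0}.Finite :=
  (Set.Finite.pi hG).subset fun x (hx : n • x = 0) i _ => congrFun hx i

section ExtensionOfFiniteExponent

variable {B : Type*} [AddCommGroup B] (A : AddSubgroup B) {n : ℕ}

theorem finite_torsion_of_nsmul_mem [AddGroup.FG A] (hnA : ∀ b : B, n • b ∈ A)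
    (hker : {t : torsion B | n • t = 0}.Finite) : Finite (torsion B) := by
  let φ : torsion B →+ A := ((nsmulAddMonoidHom n).codRestrict A hnA).comp (torsion B).subtype
  have : Finite (torsion A) := finite_torsion_of_fg A
  refine φ.finite_iff_finite_ker_range.mpr ⟨(hker.subset fun t ht => ?_).to_subtype, ?_⟩
  · exact Subtype.ext (congrArg Subtype.val (φ.mem_ker.mp ht) :)
  · have hrange : (φ.range : Set A) ⊆ torsion A := by
      rintro _ ⟨t, rfl⟩
      exact φ.isOfFinAddOrder (AddCommMonoid.addTorsion.isAddTorsion t)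
    exact ((torsion A : Set A).toFinite.subset hrange).to_subtype

theorem finite_quotient_sup_torsion_of_nsmul_mem [AddGroup.FG A] (hn : n ≠ 0)
    (hnA : ∀ b : B, n • b ∈ A) : Finite (B ⧸ (A ⊔ torsion B)) := by
  let nA : AddSubgroup A := (nsmulAddMonoidHom n).range
  have : nA.FiniteIndex := AddSubgroup.finiteIndex_range_nsmulAddMonoidHom_of_fg A hn
  let ψ : B →+ A ⧸ nA :=
    (QuotientAddGroup.mk' nA).comp ((nsmulAddMonoidHom n).codRestrict A hnA)
  have hker : ψ.ker ≤ A ⊔ torsion B := by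
    intro b hb
    obtain ⟨a, ha⟩ := (QuotientAddGroup.eq_zero_iff _).mp hb
    have hba : n • (b - a) = 0 := by
      rw [smul_sub, sub_eq_zero]
      exact (congrArg Subtype.val ha).symm
    rw [← add_sub_cancel (a : B) b]
    exact add_mem (AddSubgroup.mem_sup_left a.2) (AddSubgroup.mem_sup_right
      (isOfFinAddOrder_iff_nsmul_eq_zero.mpr ⟨n, Nat.pos_of_ne_zero hn, hba⟩))
  have := AddSubgroup.finiteIndex_of_le hker
  infer_instance

theorem finite_addMonoidHom_le_ker {M : Type*} [AddCommGroup M] [Finite M] (T : AddSubgroup B)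
    [Finite T] [Finite (B ⧸ (A ⊔ T))] : Finite {D : B →+ M // A ≤ D.ker} := by
  refine Finite.of_injective (fun D : {D : B →+ M // A ≤ D.ker} =>
    (fun t : T => D.1 t, fun q : B ⧸ (A ⊔ T) => D.1 (Quotient.out q))) ?_
  rintro ⟨D, hD⟩ ⟨D', hD'⟩ h
  simp only [Prod.mk.injEq, funext_iff] at h
  refine Subtype.ext (AddMonoidHom.ext fun b => ?_)
  obtain ⟨⟨_, hat⟩, hout⟩ := QuotientAddGroup.mk_out_eq_add (A ⊔ T) b
  obtain ⟨a, ha, t, ht, rfl⟩ := AddSubgroup.mem_sup.mp hat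
  have hrepr : ∀ E : B →+ M, A ≤ E.ker → E b = E (Quotient.out (b : B ⧸ (A ⊔ T))) - E t :=
    fun E hE => by rw [hout, map_add, map_add, E.mem_ker.mp (hE ha)]; abel
  rw [hrepr D hD, hrepr D' hD', h.1 ⟨t, ht⟩, h.2]

theorem finite_addAut_fixing_of_nsmul_mem (hn : n ≠ 0) (hnA : ∀ b : B, n • b ∈ A)
    [Finite (torsion B)] [Finite (B ⧸ (A ⊔ torsion B))] :
    Finite {σ : AddAut B // ∀ a ∈ A, σ a = a} := by
  let δ (σ : AddAut B) : B →+ B := σ.toAddMonoidHom - AddMonoidHom.id B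
  have hδ (σ : {σ : AddAut B // ∀ a ∈ A, σ a = a}) (b : B) : δ σ b ∈ torsion B :=
    isOfFinAddOrder_iff_nsmul_eq_zero.mpr ⟨n, Nat.pos_of_ne_zero hn, by
      simp [δ, smul_sub, ← map_nsmul, σ.2 _ (hnA b)]⟩
  have := finite_addMonoidHom_le_ker A (M := torsion B) (torsion B)
  refine Finite.of_injective (β := {D : B →+ torsion B // A ≤ D.ker})
    (fun σ => ⟨(δ σ).codRestrict _ (hδ σ), fun a ha => Subtype.ext ?_⟩) fun σ τ h => ?_
  · simp [δ, σ.2 a ha]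
  · refine Subtype.ext (AddEquiv.ext fun b => ?_)
    simpa [δ] using congrArg Subtype.val (DFunLike.congr_fun (congrArg Subtype.val h) b)

end ExtensionOfFiniteExponent

theorem stmt11_general {B : Type*} [AddCommGroup B] (s : ℕ) (A : AddSubgroup B)
    (hfg : AddGroup.FG ↥A)
    (hemb : ∃ f : ↥(AddCommGroup.torsion B) →+ (Fin s → AddCircle (1 : ℚ)),
      Function.Injective f)
    (hexp : ∃ n : ℕ, 0 < n ∧ ∀ b : B, n • b ∈ A) :
    Finite {σ : AddAut B // ∀ a ∈ A, σ a = a} := by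
  obtain ⟨f, hf⟩ := hemb
  obtain ⟨n, hn, hnA⟩ := hexp
  have hcircle : {x : Fin s → AddCircle (1 : ℚ) | n • x = 0}.Finite :=
    Set.finite_setOf_nsmul_eq_zero_pi fun _ => AddCircle.finite_torsion 1 hn
  have : Finite (torsion B) :=
    finite_torsion_of_nsmul_mem A hnA (Set.finite_setOf_nsmul_eq_zero_of_injective hf hcircle)
  have := finite_quotient_sup_torsion_of_nsmul_mem A hn.ne' hnA
  exact finite_addAut_fixing_of_nsmul_mem A hn.ne' hnA

/-- Let `B` be an `s`-extension of a finitely generated subgroup `A`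
such that `B/A` has finite exponent. Then the group `Aut_A(B)` of automorphisms of `B`
fixing `A` pointwise is finite. -/
theorem stmt11 {B : Type*} [AddCommGroup B] (s : ℕ) (A : AddSubgroup B)
    (hfg : AddGroup.FG ↥A)
    (htors : ∀ b : B, ∃ n : ℕ, 0 < n ∧ n • b ∈ A)
    (hemb : ∃ f : ↥(AddCommGroup.torsion B) →+ (Fin s → AddCircle (1 : ℚ)),
      Function.Injective f)
    (hexp : ∃ n : ℕ, 0 < n ∧ ∀ b : B, n • b ∈ A) :
    Finite {σ : AddAut B // ∀ a ∈ A, σ a = a} :=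
  stmt11_general s A hfg hemb hexp
end

section
/- Let ℓ be a prime, R = Mat_{s×s}(ℤ_ℓ), and M = Mat_{s×r}(ℤ_ℓ) as a left R-module. Let H be a closed subgroup of GL_s(ℤ_ℓ) and V ⊆ M a closed subgroup stable under left multiplication by H. Let W = R·V be the R-submodule generated by V, and let S be the closed ℤ_ℓ-subalgebra of R generated by H. If W ⊇ ℓ^n M and S ⊇ ℓ^m R for non-negative integers n, m, then V ⊇ ℓ^{n+m} M. -/
/-! Since the integers are dense in `ℤ_ℓ` and `V` is closed, `V` is a `ℤ_ℓ`-module. The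
matrices `a` with `a V ⊆ V` then form a closed `ℤ_ℓ`-subalgebra containing `H`, hence
containing `S ⊇ ℓ^m R`. So `ℓ^m (g v) ∈ V` for all `g ∈ R`, `v ∈ V`, i.e. `ℓ^m W ⊆ V`,
and `ℓ^{n+m} M ⊆ ℓ^m W ⊆ V`. -/

theorem PadicInt.smul_mem_of_isClosed {p : ℕ} [Fact p.Prime] {M : Type*} [AddCommGroup M]
    [Module ℤ_[p] M] [TopologicalSpace M] [ContinuousSMul ℤ_[p] M] {V : AddSubgroup M}
    (hV : IsClosed (V : Set M)) (c : ℤ_[p]) {v : M} (hv : v ∈ V) : c • v ∈ V := by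
  have hclosed : IsClosed {c : ℤ_[p] | c • v ∈ V} :=
    hV.preimage (continuous_id.smul continuous_const)
  have hint : Set.range (Int.cast : ℤ → ℤ_[p]) ⊆ {c : ℤ_[p] | c • v ∈ V} := by
    rintro _ ⟨k, rfl⟩
    simpa only [Set.mem_ofPred_eq, Int.cast_smul_eq_zsmul] using zsmul_mem hv k
  exact hclosed.closure_subset_iff.mpr hint
    ((PadicInt.denseRange_intCast (p := p)).closure_range ▸ Set.mem_univ c)

namespace Submodule

variable {R : Type*} [CommRing R] {ι κ : Type*} [Fintype ι] [DecidableEq ι]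

def leftMulStabilizer (V : Submodule R (Matrix ι κ R)) : Subalgebra R (Matrix ι ι R) where
  carrier := {a | ∀ v ∈ V, a * v ∈ V}
  mul_mem' {a b} ha hb v hv := by rw [Matrix.mul_assoc]; exact ha _ (hb v hv)
  add_mem' {a b} ha hb v hv := by rw [Matrix.add_mul]; exact add_mem (ha v hv) (hb v hv)
  algebraMap_mem' c v hv := by
    rw [Algebra.algebraMap_eq_smul_one, Matrix.smul_mul, Matrix.one_mul]
    exact V.smul_mem c hv

theorem mem_leftMulStabilizer {V : Submodule R (Matrix ι κ R)} {a : Matrix ι ι R} :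
    a ∈ V.leftMulStabilizer ↔ ∀ v ∈ V, a * v ∈ V :=
  Iff.rfl

theorem isClosed_leftMulStabilizer [TopologicalSpace R] [IsTopologicalRing R]
    {V : Submodule R (Matrix ι κ R)} (hV : IsClosed (V : Set (Matrix ι κ R))) :
    IsClosed (V.leftMulStabilizer : Set (Matrix ι ι R)) := by
  have : (V.leftMulStabilizer : Set (Matrix ι ι R)) = ⋂ v ∈ V, (· * v) ⁻¹' V := by
    ext a; simp [mem_leftMulStabilizer]
  rw [this]
  exact isClosed_biInter fun v _ => hV.preimage (continuous_id.matrix_mul continuous_const)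

theorem topologicalClosure_adjoin_le_leftMulStabilizer [TopologicalSpace R]
    [IsTopologicalRing R] {V : Submodule R (Matrix ι κ R)}
    (hV : IsClosed (V : Set (Matrix ι κ R))) {T : Set (Matrix ι ι R)}
    (hT : ∀ t ∈ T, ∀ v ∈ V, t * v ∈ V) :
    (Algebra.adjoin R T).topologicalClosure ≤ V.leftMulStabilizer :=
  Subalgebra.topologicalClosure_minimal (Algebra.adjoin_le hT) (isClosed_leftMulStabilizer hV)

theorem smul_mem_of_mem_closure_mul {V : Submodule R (Matrix ι κ R)} {c : R}
    (hc : ∀ g : Matrix ι ι R, c • g ∈ V.leftMulStabilizer) {y : Matrix ι κ R}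
    (hy : y ∈ AddSubgroup.closure {y | ∃ g : Matrix ι ι R, ∃ v ∈ V, y = g * v}) :
    c • y ∈ V := by
  suffices AddSubgroup.closure {y | ∃ g : Matrix ι ι R, ∃ v ∈ V, y = g * v} ≤
      V.toAddSubgroup.comap (DistribSMul.toAddMonoidHom _ c) from this hy
  rw [AddSubgroup.closure_le]
  rintro _ ⟨g, v, hv, rfl⟩
  show c • (g * v) ∈ V
  rw [← Matrix.smul_mul]
  exact hc g v hv

end Submodule

theorem stmt16_general (ℓ : ℕ) [Fact ℓ.Prime] (s r : ℕ) (n m : ℕ)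
    (H : Subgroup (Matrix (Fin s) (Fin s) ℤ_[ℓ])ˣ)
    (V : AddSubgroup (Matrix (Fin s) (Fin r) ℤ_[ℓ]))
    (hVclosed : IsClosed (V : Set (Matrix (Fin s) (Fin r) ℤ_[ℓ])))
    (hHV : ∀ u ∈ H, ∀ v ∈ V,
      ((u : (Matrix (Fin s) (Fin s) ℤ_[ℓ])ˣ) : Matrix (Fin s) (Fin s) ℤ_[ℓ]) * v ∈ V)
    -- `W = R·V ⊇ ℓ^n M`
    (hW : ∀ x : Matrix (Fin s) (Fin r) ℤ_[ℓ],
      ((ℓ : ℤ_[ℓ]) ^ n) • x ∈ AddSubgroup.closure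
        {y : Matrix (Fin s) (Fin r) ℤ_[ℓ] |
          ∃ g : Matrix (Fin s) (Fin s) ℤ_[ℓ], ∃ v ∈ V, y = g * v})
    -- `S ⊇ ℓ^m R`
    (hS : ∀ g : Matrix (Fin s) (Fin s) ℤ_[ℓ],
      ((ℓ : ℤ_[ℓ]) ^ m) • g ∈
        (Algebra.adjoin ℤ_[ℓ]
          (Units.val '' (H : Set (Matrix (Fin s) (Fin s) ℤ_[ℓ])ˣ))).topologicalClosure) :
    ∀ x : Matrix (Fin s) (Fin r) ℤ_[ℓ], ((ℓ : ℤ_[ℓ]) ^ (n + m)) • x ∈ V := by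
  intro x
  let V' : Submodule ℤ_[ℓ] (Matrix (Fin s) (Fin r) ℤ_[ℓ]) :=
    { V with smul_mem' := fun c _ hv => PadicInt.smul_mem_of_isClosed hVclosed c hv }
  have hH : ∀ t ∈ Units.val '' (H : Set (Matrix (Fin s) (Fin s) ℤ_[ℓ])ˣ),
      ∀ v ∈ V', t * v ∈ V' := by
    rintro _ ⟨u, hu, rfl⟩
    exact hHV u hu
  have hStab (g : Matrix (Fin s) (Fin s) ℤ_[ℓ]) :
      (ℓ : ℤ_[ℓ]) ^ m • g ∈ V'.leftMulStabilizer :=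
    Submodule.topologicalClosure_adjoin_le_leftMulStabilizer (V := V') hVclosed hH (hS g)
  have := Submodule.smul_mem_of_mem_closure_mul (V := V') hStab (hW x)
  rwa [smul_smul, ← pow_add, add_comm m n] at this

/-- Let `ℓ` be a prime, `R = Mat_{s×s}(ℤ_ℓ)`, `M = Mat_{s×r}(ℤ_ℓ)`.
Let `H ≤ GL_s(ℤ_ℓ)` be a closed subgroup and `V ⊆ M` a closed subgroup stable under
left multiplication by `H`. Let `W = R·V` and let `S` be the closed
`ℤ_ℓ`-subalgebra of `R` generated by `H`. If `W ⊇ ℓ^n M` and `S ⊇ ℓ^m R`, then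
`V ⊇ ℓ^{n+m} M`. -/
theorem stmt16 (ℓ : ℕ) [Fact ℓ.Prime] (s r : ℕ) (n m : ℕ)
    (H : Subgroup (Matrix (Fin s) (Fin s) ℤ_[ℓ])ˣ)
    (hHclosed : IsClosed (Units.val '' (H : Set (Matrix (Fin s) (Fin s) ℤ_[ℓ])ˣ)))
    (V : AddSubgroup (Matrix (Fin s) (Fin r) ℤ_[ℓ]))
    (hVclosed : IsClosed (V : Set (Matrix (Fin s) (Fin r) ℤ_[ℓ])))
    (hHV : ∀ u ∈ H, ∀ v ∈ V,
      ((u : (Matrix (Fin s) (Fin s) ℤ_[ℓ])ˣ) : Matrix (Fin s) (Fin s) ℤ_[ℓ]) * v ∈ V)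
    -- `W = R·V ⊇ ℓ^n M`
    (hW : ∀ x : Matrix (Fin s) (Fin r) ℤ_[ℓ],
      ((ℓ : ℤ_[ℓ]) ^ n) • x ∈ AddSubgroup.closure
        {y : Matrix (Fin s) (Fin r) ℤ_[ℓ] |
          ∃ g : Matrix (Fin s) (Fin s) ℤ_[ℓ], ∃ v ∈ V, y = g * v})
    -- `S ⊇ ℓ^m R`
    (hS : ∀ g : Matrix (Fin s) (Fin s) ℤ_[ℓ],
      ((ℓ : ℤ_[ℓ]) ^ m) • g ∈
        (Algebra.adjoin ℤ_[ℓ]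
          (Units.val '' (H : Set (Matrix (Fin s) (Fin s) ℤ_[ℓ])ˣ))).topologicalClosure) :
    ∀ x : Matrix (Fin s) (Fin r) ℤ_[ℓ], ((ℓ : ℤ_[ℓ]) ^ (n + m)) • x ∈ V :=
  stmt16_general ℓ s r n m H V hVclosed hHV hW hS
end

section
/- Let R = Mat_{s×s}(Ẑ) and M = Mat_{s×r}(Ẑ). Let H be a closed subgroup of GL_s(Ẑ) and V ⊆ M a closed subgroup stable under left multiplication by H; let W = R·V. For each prime ℓ let H_ℓ be the image of H in GL_s(ℤ_ℓ) and ℤ_ℓ[H_ℓ] the closed ℤ_ℓ-subalgebra of Mat_{s×s}(ℤ_ℓ) generated by H_ℓ. Suppose there are positive integers n, m with W ⊇ nM and ℤ_ℓ[H_ℓ] ⊇ ℓ^{v_ℓ(m)} Mat_{s×s}(ℤ_ℓ) for all primes ℓ. Then V ⊇ nm·M. -/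
set_option synthInstance.maxHeartbeats 800000
set_option maxHeartbeats 1600000

instance (p : Nat.Primes) : Fact (Nat.Prime (p : ℕ)) := ⟨p.2⟩

/-!
Since `ℤ` is dense in `Ẑ = ∏ ℓ ℤ_ℓ` (Chinese remainder theorem), a closed subgroup `V` of `M` is
a `Ẑ`-submodule; in particular it is stable under the idempotents of `Ẑ` and is the product of its
slices `V_ℓ`, each a closed `ℤ_ℓ`-submodule stable under `H_ℓ`, hence under `ℤ_ℓ[H_ℓ]`. Writing
`m = ℓ^{v_ℓ(m)} m'`, every `m • g` with `g ∈ Mat_{s×s}(ℤ_ℓ)` lies in `ℤ_ℓ[H_ℓ]`, so `m W_ℓ ⊆ V_ℓ`.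
As `n M_ℓ ⊆ W_ℓ`, we get `nm M_ℓ ⊆ V_ℓ` for every `ℓ`, and therefore `nm M ⊆ V`.
-/

open Filter Function

namespace PadicInt

theorem exists_nat_forall_pow_dvd_sub (I : Finset Nat.Primes) (k : ℕ)
    (t : ∀ p : Nat.Primes, ℤ_[(p : ℕ)]) :
    ∃ N : ℕ, ∀ p ∈ I, ((p : ℕ) : ℤ_[(p : ℕ)]) ^ k ∣ N - t p := by
  have hcop : Set.Pairwise I (Nat.Coprime on fun p : Nat.Primes => (p : ℕ) ^ k) :=
    fun p _ q _ hpq =>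
      Nat.Coprime.pow k k ((Nat.coprime_primes p.2 q.2).2 (Subtype.coe_ne_coe.2 hpq))
  obtain ⟨N, hNmod⟩ := Nat.chineseRemainderOfFinset (fun p => (t p).appr k) _ I
    (fun p _ => pow_ne_zero k p.2.ne_zero) hcop
  refine ⟨N, fun p hp => ?_⟩
  have hN : ((p : ℕ) : ℤ_[(p : ℕ)]) ^ k ∣ (t p).appr k - N := by
    simpa using map_dvd (Int.castRingHom ℤ_[(p : ℕ)]) ((Nat.modEq_iff_dvd).1 (hNmod p hp))
  have happr := (Ideal.mem_span_singleton).1 ((t p).appr_spec k)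
  simpa using (dvd_add hN happr).neg_right

theorem denseRange_natCast_pi : DenseRange (Nat.cast : ℕ → ∀ p : Nat.Primes, ℤ_[(p : ℕ)]) := by
  intro t
  choose N hN using fun k => exists_nat_forall_pow_dvd_sub
    ((Finset.range k).preimage (↑) Subtype.val_injective.injOn) k t
  refine mem_closure_of_tendsto (b := atTop)
    (f := fun k => (N k : ∀ p : Nat.Primes, ℤ_[(p : ℕ)])) (tendsto_pi_nhds.2 fun p => ?_)
    (Eventually.of_forall fun k => Set.mem_range_self (N k))
  rw [tendsto_iff_norm_sub_tendsto_zero]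
  have hp : ((p : ℕ) : ℝ)⁻¹ < 1 := inv_lt_one_of_one_lt₀ (by exact_mod_cast p.2.one_lt)
  refine squeeze_zero_norm' ?_ (tendsto_pow_atTop_nhds_zero_of_lt_one (by positivity) hp)
  filter_upwards [eventually_gt_atTop (p : ℕ)] with k hk
  rw [norm_norm, inv_pow, ← zpow_natCast, ← zpow_neg, norm_le_pow_iff_mem_span_pow,
    Ideal.mem_span_singleton]
  exact hN k p (Finset.mem_preimage.2 (Finset.mem_range.2 hk))

theorem denseRange_intCast_pi : DenseRange (Int.cast : ℤ → ∀ p : Nat.Primes, ℤ_[(p : ℕ)]) :=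
  denseRange_natCast_pi.mono (by rintro _ ⟨k, rfl⟩; exact ⟨k, Int.cast_natCast k⟩)

end PadicInt

namespace AddSubgroup

theorem smul_mem_of_denseRange_intCast {A M : Type*} [Ring A] [TopologicalSpace A]
    [AddCommGroup M] [Module A M] [TopologicalSpace M] [ContinuousSMul A M]
    (hA : DenseRange (Int.cast : ℤ → A)) {V : AddSubgroup M} (hV : IsClosed (V : Set M))
    (c : A) {v : M} (hv : v ∈ V) : c • v ∈ V :=
  hA.induction_on c (hV.preimage (continuous_id.smul continuous_const))
    fun k => by simpa only [Set.mem_preimage, Int.cast_smul_eq_zsmul] using V.zsmul_mem hv k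

variable {ι : Type*} [DecidableEq ι] {X : ι → Type*} [∀ i, AddCommGroup (X i)]
  [∀ i, TopologicalSpace (X i)]

theorem mem_of_forall_single_mem {V : AddSubgroup (∀ i, X i)}
    (hV : IsClosed (V : Set (∀ i, X i))) {x : ∀ i, X i} (hx : ∀ i, Pi.single i (x i) ∈ V) :
    x ∈ V := by
  have hsum : HasSum (fun i => Pi.single i (x i)) x :=
    Pi.hasSum.2 fun i => by
      simpa using hasSum_single (f := fun j => Pi.single j (x j) i) i
        fun j hj => Pi.single_eq_of_ne hj.symm _
  exact hV.mem_of_tendsto hsum (Eventually.of_forall fun s => V.sum_mem fun i _ => hx i)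

variable {R : ι → Type*} [∀ i, Ring (R i)] [∀ i, TopologicalSpace (R i)]
  [∀ i, Module (R i) (X i)] [∀ i, ContinuousSMul (R i) (X i)]

/-- The paper's `V_ℓ`; by `apply_mem_piSlice` the slice contains the projection of `V`. -/
def piSlice (hA : DenseRange (Int.cast : ℤ → ∀ i, R i)) (V : AddSubgroup (∀ i, X i))
    (hV : IsClosed (V : Set (∀ i, X i))) (i : ι) : Submodule (R i) (X i) where
  toAddSubmonoid := (V.comap (AddMonoidHom.single X i)).toAddSubmonoid
  smul_mem' c z hz := by
    have hz : Pi.single i z ∈ V := hz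
    show Pi.single i (c • z) ∈ V
    simpa only [Pi.single_smul₀] using smul_mem_of_denseRange_intCast hA hV (Pi.single i c) hz

theorem mem_piSlice {hA : DenseRange (Int.cast : ℤ → ∀ i, R i)} {V : AddSubgroup (∀ i, X i)}
    {hV : IsClosed (V : Set (∀ i, X i))} {i : ι} {z : X i} :
    z ∈ V.piSlice hA hV i ↔ Pi.single i z ∈ V :=
  Iff.rfl

theorem isClosed_piSlice (hA : DenseRange (Int.cast : ℤ → ∀ i, R i)) {V : AddSubgroup (∀ i, X i)}
    (hV : IsClosed (V : Set (∀ i, X i))) (i : ι) : IsClosed (V.piSlice hA hV i : Set (X i)) :=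
  hV.preimage (continuous_single i)

theorem apply_mem_piSlice (hA : DenseRange (Int.cast : ℤ → ∀ i, R i)) {V : AddSubgroup (∀ i, X i)}
    (hV : IsClosed (V : Set (∀ i, X i))) {y : ∀ i, X i} (hy : y ∈ V) (i : ι) :
    y i ∈ V.piSlice hA hV i := by
  have : Pi.single i (1 : R i) • y = Pi.single i (y i) := by
    ext j
    rcases eq_or_ne j i with rfl | hj <;> simp [*]
  rw [mem_piSlice, ← this]
  exact smul_mem_of_denseRange_intCast hA hV _ hy

theorem map_mem_piSlice (hA : DenseRange (Int.cast : ℤ → ∀ i, R i)) {V : AddSubgroup (∀ i, X i)}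
    (hV : IsClosed (V : Set (∀ i, X i))) (op : ∀ i, X i → X i) (hop : ∀ i, op i 0 = 0)
    (hV_op : ∀ v ∈ V, (fun i => op i (v i)) ∈ V) {i : ι} {z : X i} (hz : z ∈ V.piSlice hA hV i) :
    op i z ∈ V.piSlice hA hV i := by
  rw [mem_piSlice, Pi.single_op op hop]
  exact hV_op _ hz

end AddSubgroup

theorem nsmul_mem_of_forall_ordProj_smul_mem {R M : Type*} [Semiring R] [AddCommMonoid M]
    [Module R M] {T : Set M} (p k : ℕ) (hT : ∀ g : M, ((p : R) ^ k.factorization p) • g ∈ T)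
    (g : M) : k • g ∈ T := by
  have hk : k • g = ((p : R) ^ k.factorization p) • ((k / p ^ k.factorization p) • g) := by
    rw [← Nat.cast_pow, Nat.cast_smul_eq_nsmul, ← mul_smul, Nat.ordProj_mul_ordCompl_eq_self]
  rw [hk]
  exact hT _

namespace Submodule

variable {R : Type*} [CommRing R] [TopologicalSpace R] [IsTopologicalSemiring R]
  {m n : Type*} [Fintype m] [DecidableEq m]

def matrixLeftStabilizer (U : Submodule R (Matrix m n R)) : Subalgebra R (Matrix m m R) where
  carrier := {a | ∀ z ∈ U, a * z ∈ U}
  mul_mem' ha hb z hz := by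
    rw [Matrix.mul_assoc]
    exact ha _ (hb z hz)
  add_mem' ha hb z hz := by
    rw [Matrix.add_mul]
    exact U.add_mem (ha z hz) (hb z hz)
  algebraMap_mem' c z hz := by
    rw [Algebra.algebraMap_eq_smul_one, Matrix.smul_mul, Matrix.one_mul]
    exact U.smul_mem c hz

theorem isClosed_matrixLeftStabilizer {U : Submodule R (Matrix m n R)}
    (hU : IsClosed (U : Set (Matrix m n R))) :
    IsClosed (U.matrixLeftStabilizer : Set (Matrix m m R)) := by
  simp only [matrixLeftStabilizer, Subalgebra.coe_mk, Set.ofPred_forall]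
  exact isClosed_biInter fun z _ => hU.preimage (continuous_id.matrix_mul continuous_const)

theorem nsmul_mem_of_mem_closure_mul {U : Submodule R (Matrix m n R)}
    (hU : IsClosed (U : Set (Matrix m n R))) {S : Set (Matrix m m R)}
    (hSU : ∀ a ∈ S, ∀ z ∈ U, a * z ∈ U) (p k : ℕ)
    (hS : ∀ g, ((p : R) ^ k.factorization p) • g ∈ (Algebra.adjoin R S).topologicalClosure)
    {w : Matrix m n R}
    (hw : w ∈ AddSubgroup.closure {y | ∃ g : Matrix m m R, ∃ z ∈ U, y = g * z}) :
    k • w ∈ U := by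
  have hstab : (Algebra.adjoin R S).topologicalClosure ≤ U.matrixLeftStabilizer :=
    Subalgebra.topologicalClosure_minimal (Algebra.adjoin_le hSU)
      (isClosed_matrixLeftStabilizer hU)
  have hgen : ∀ g : Matrix m m R, ∀ z ∈ U, k • (g * z) ∈ U := fun g z hz => by
    rw [← Matrix.smul_mul]
    exact nsmul_mem_of_forall_ordProj_smul_mem (T := U.matrixLeftStabilizer) p k
      (fun g => hstab (hS g)) g z hz
  refine (AddSubgroup.closure_le
    (U.toAddSubgroup.comap (DistribSMul.toAddMonoidHom _ k))).2 ?_ hw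
  rintro _ ⟨g, z, hz, rfl⟩
  exact hgen g z hz

end Submodule

theorem AddSubgroup.apply_mem_closure_mul_piSlice {ι : Type*} [DecidableEq ι] {R : ι → Type*}
    [∀ i, CommRing (R i)] [∀ i, TopologicalSpace (R i)] [∀ i, IsTopologicalSemiring (R i)]
    {m n : Type*} [Fintype m] (hA : DenseRange (Int.cast : ℤ → ∀ i, R i))
    {V : AddSubgroup (∀ i, Matrix m n (R i))} (hV : IsClosed (V : Set (∀ i, Matrix m n (R i))))
    {w : ∀ i, Matrix m n (R i)}
    (hw : w ∈ AddSubgroup.closure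
      {y | ∃ g : ∀ i, Matrix m m (R i), ∃ v ∈ V, y = fun i => g i * v i}) (i : ι) :
    w i ∈ AddSubgroup.closure {y | ∃ g : Matrix m m (R i), ∃ z ∈ V.piSlice hA hV i, y = g * z} := by
  refine (AddSubgroup.closure_le ((AddSubgroup.closure _).comap (Pi.evalAddMonoidHom _ i))).2
    ?_ hw
  rintro _ ⟨g, v, hv, rfl⟩
  exact AddSubgroup.subset_closure ⟨g i, v i, V.apply_mem_piSlice hA hV hv i, rfl⟩

theorem stmt17_general (s r : ℕ) (n m : ℕ)
    (H : Subgroup ((p : Nat.Primes) → Matrix (Fin s) (Fin s) ℤ_[(p : ℕ)])ˣ)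
    (V : AddSubgroup ((p : Nat.Primes) → Matrix (Fin s) (Fin r) ℤ_[(p : ℕ)]))
    (hVclosed : IsClosed (V : Set ((p : Nat.Primes) → Matrix (Fin s) (Fin r) ℤ_[(p : ℕ)])))
    (hHV : ∀ u ∈ H, ∀ v ∈ V,
      (fun p => ((u : (p : Nat.Primes) → Matrix (Fin s) (Fin s) ℤ_[(p : ℕ)]) p) * v p) ∈ V)
    -- `W = R·V ⊇ n·M`
    (hW : ∀ x : (p : Nat.Primes) → Matrix (Fin s) (Fin r) ℤ_[(p : ℕ)],
      n • x ∈ AddSubgroup.closure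
        {y : (p : Nat.Primes) → Matrix (Fin s) (Fin r) ℤ_[(p : ℕ)] |
          ∃ g : (p : Nat.Primes) → Matrix (Fin s) (Fin s) ℤ_[(p : ℕ)],
            ∃ v ∈ V, y = fun p => g p * v p})
    -- `ℤ_ℓ[H_ℓ] ⊇ ℓ^{v_ℓ(m)}·Mat_{s×s}(ℤ_ℓ)` for every prime `ℓ`
    (hS : ∀ (p : Nat.Primes) (g : Matrix (Fin s) (Fin s) ℤ_[(p : ℕ)]),
      (((p : ℕ) : ℤ_[(p : ℕ)]) ^ (m.factorization (p : ℕ))) • g ∈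
        (Algebra.adjoin ℤ_[(p : ℕ)]
          {h : Matrix (Fin s) (Fin s) ℤ_[(p : ℕ)] |
            ∃ u ∈ H, (u : (q : Nat.Primes) → Matrix (Fin s) (Fin s) ℤ_[(q : ℕ)]) p = h
          }).topologicalClosure) :
    ∀ x : (p : Nat.Primes) → Matrix (Fin s) (Fin r) ℤ_[(p : ℕ)], (n * m) • x ∈ V := by
  intro x
  have hA := PadicInt.denseRange_intCast_pi
  refine V.mem_of_forall_single_mem hVclosed fun q => ?_
  rw [← AddSubgroup.mem_piSlice (hA := hA) (hV := hVclosed), Pi.smul_apply, mul_comm, mul_smul]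
  refine Submodule.nsmul_mem_of_mem_closure_mul (V.isClosed_piSlice hA hVclosed q) ?_ q m (hS q)
    (V.apply_mem_closure_mul_piSlice hA hVclosed (hW x) q)
  rintro _ ⟨u, hu, rfl⟩ z hz
  exact V.map_mem_piSlice hA hVclosed
    (fun p v => (u : ∀ p : Nat.Primes, Matrix (Fin s) (Fin s) ℤ_[(p : ℕ)]) p * v)
    (fun p => Matrix.mul_zero _) (hHV u hu) hz

/-- Write `Mat_{s×r}(Ẑ) = ∏_ℓ Mat_{s×r}(ℤ_ℓ)` and
`GL_s(Ẑ) = (∏_ℓ Mat_{s×s}(ℤ_ℓ))ˣ`. Let `H ≤ GL_s(Ẑ)` be a closed subgroup and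
`V ⊆ M = Mat_{s×r}(Ẑ)` a closed subgroup stable under left multiplication by `H`;
let `W = R·V`. For each prime `ℓ` let `H_ℓ` be the image of `H` in `GL_s(ℤ_ℓ)` and
`ℤ_ℓ[H_ℓ]` the closed `ℤ_ℓ`-subalgebra generated by `H_ℓ`. If there are positive
integers `n, m` with `W ⊇ n·M` and `ℤ_ℓ[H_ℓ] ⊇ ℓ^{v_ℓ(m)}·Mat_{s×s}(ℤ_ℓ)` for all
primes `ℓ`, then `V ⊇ nm·M`. -/
theorem stmt17 (s r : ℕ) (n m : ℕ) (hn : 0 < n) (hm : 0 < m)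
    (H : Subgroup ((p : Nat.Primes) → Matrix (Fin s) (Fin s) ℤ_[(p : ℕ)])ˣ)
    (hHclosed : IsClosed (Units.val ''
      (H : Set ((p : Nat.Primes) → Matrix (Fin s) (Fin s) ℤ_[(p : ℕ)])ˣ)))
    (V : AddSubgroup ((p : Nat.Primes) → Matrix (Fin s) (Fin r) ℤ_[(p : ℕ)]))
    (hVclosed : IsClosed (V : Set ((p : Nat.Primes) → Matrix (Fin s) (Fin r) ℤ_[(p : ℕ)])))
    (hHV : ∀ u ∈ H, ∀ v ∈ V,
      (fun p => ((u : (p : Nat.Primes) → Matrix (Fin s) (Fin s) ℤ_[(p : ℕ)]) p) * v p) ∈ V)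
    -- `W = R·V ⊇ n·M`
    (hW : ∀ x : (p : Nat.Primes) → Matrix (Fin s) (Fin r) ℤ_[(p : ℕ)],
      n • x ∈ AddSubgroup.closure
        {y : (p : Nat.Primes) → Matrix (Fin s) (Fin r) ℤ_[(p : ℕ)] |
          ∃ g : (p : Nat.Primes) → Matrix (Fin s) (Fin s) ℤ_[(p : ℕ)],
            ∃ v ∈ V, y = fun p => g p * v p})
    -- `ℤ_ℓ[H_ℓ] ⊇ ℓ^{v_ℓ(m)}·Mat_{s×s}(ℤ_ℓ)` for every prime `ℓ`
    (hS : ∀ (p : Nat.Primes) (g : Matrix (Fin s) (Fin s) ℤ_[(p : ℕ)]),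
      (((p : ℕ) : ℤ_[(p : ℕ)]) ^ (m.factorization (p : ℕ))) • g ∈
        (Algebra.adjoin ℤ_[(p : ℕ)]
          {h : Matrix (Fin s) (Fin s) ℤ_[(p : ℕ)] |
            ∃ u ∈ H, (u : (q : Nat.Primes) → Matrix (Fin s) (Fin s) ℤ_[(q : ℕ)]) p = h
          }).topologicalClosure) :
    ∀ x : (p : Nat.Primes) → Matrix (Fin s) (Fin r) ℤ_[(p : ℕ)], (n * m) • x ∈ V :=
  stmt17_general s r n m H V hVclosed hHV hW hS
end

section
/- Let G be a profinite group, A a profinite abelian G-module, and suppose the center of G contains an element g acting on A as multiplication by a unit z ∈ Ẑ^× with z − 1 = u·m for some positive integer m and unit u ∈ Ẑ^×. Then m · H^1(G, A) = 0. In particular (Sah's lemma argument), if G ⊆ GL_2(Ẑ) contains all matrices congruent to the identity modulo an even positive integer m_E, and A = (ℚ/ℤ)^2 with the standard action, then m_E · H^1(G, A) = 0. -/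
/-!
If `g` is central, evaluating a `1`-cocycle `f` on both sides of `g x = x g` gives
`(g - 1) f(x) = (x - 1) f(g)`. When `g` acts as a scalar `z` with `z - 1 = u m`, `u` a unit,
this says `m f(x) = (x - 1) (u⁻¹ f(g))`, so `m f` is a coboundary.

For `G ⊆ GL₂(Ẑ)` it remains to find `z ∈ Ẑˣ` with `z - 1 = u m`, `u ∈ Ẑˣ`; then `z I ∈ G`.
With `k = m + 1`, which is odd, `e = lim k^{n!}` is the idempotent of `Ẑ = ∏ ℤ_ℓ` equal to `1`
at the primes `ℓ ∤ k` and to `0` at the primes `ℓ ∣ k`. Then `u = 2e - 1` squares to `1`, and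
`z = 1 + m u` is `k` modulo the primes not dividing `k` and `2` modulo the (odd) primes
dividing `k`, so it is a unit.
-/

set_option synthInstance.maxHeartbeats 800000
set_option maxHeartbeats 1600000

/-- The ring `Ẑ` of profinite integers, realized as the subring of `∏ n, ℤ/nℤ`
consisting of the compatible sequences (i.e. `lim_n ℤ/nℤ`). -/
def ZHat : Subring ((n : ℕ+) → ZMod n) where
  carrier := {f | ∀ (m n : ℕ+) (h : (n : ℕ) ∣ (m : ℕ)), ZMod.castHom h (ZMod n) (f m) = f n}
  zero_mem' := by intro m n h; simp
  one_mem' := by intro m n h; exact map_one (ZMod.castHom h (ZMod n))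
  add_mem' := by
    intro a b ha hb m n h
    simp only [Pi.add_apply, map_add, ha m n h, hb m n h]
  neg_mem' := by
    intro a ha m n h
    simp only [Pi.neg_apply, map_neg, ha m n h]
  mul_mem' := by
    intro a b ha hb m n h
    simp only [Pi.mul_apply, map_mul, ha m n h, hb m n h]

/-- The natural action of `Ẑ` on `ℚ/ℤ`: `z` acts on an element `x` of order `n`
through the component of `z` in `ℤ/nℤ`. -/
noncomputable def zhatSmul (z : ZHat) (x : AddCircle (1 : ℚ)) : AddCircle (1 : ℚ) :=
  if h : 0 < addOrderOf x then
    ((z : (n : ℕ+) → ZMod n) ⟨addOrderOf x, h⟩).val • x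
  else 0

/-- The standard action of a `2 × 2` matrix over `Ẑ` on `(ℚ/ℤ)²`. -/
noncomputable def matApply (f : Matrix (Fin 2) (Fin 2) ZHat)
    (x : Fin 2 → AddCircle (1 : ℚ)) : Fin 2 → AddCircle (1 : ℚ) :=
  fun i => ∑ j, zhatSmul (f i j) (x j)

open scoped Nat

theorem Nat.dvd_pow_factorial_mul_pow_factorial_sub_one (k : ℕ) {n : ℕ} (hn : 0 < n) :
    n ∣ k ^ n ! * (k ^ (n !) - 1) := by
  rw [Nat.dvd_iff_prime_pow_dvd_dvd]
  intro p a hp hpa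
  have hle : p ^ a ≤ n := Nat.le_of_dvd hn hpa
  by_cases hpk : p ∣ k
  · have ha : a ≤ n ! := ((Nat.lt_pow_self hp.one_lt).le.trans hle).trans n.self_le_factorial
    exact ((pow_dvd_pow_of_dvd hpk a).trans (pow_dvd_pow k ha)).mul_right _
  · have hk : 0 < k := Nat.pos_of_ne_zero (by rintro rfl; exact hpk (dvd_zero p))
    have hcop : k.Coprime (p ^ a) := ((hp.coprime_iff_not_dvd.mpr hpk).pow_left a).symm
    obtain ⟨c, hc⟩ := Nat.dvd_factorial (Nat.totient_pos.mpr (pow_pos hp.pos a))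
      ((Nat.totient_le _).trans hle)
    have h1 : k ^ n ! ≡ 1 [MOD p ^ a] := by
      simpa [hc, pow_mul] using (Nat.ModEq.pow_totient hcop).pow c
    exact ((Nat.modEq_iff_dvd' (pow_pos hk _)).mp h1.symm).mul_left _

theorem ZMod.isIdempotentElem_natCast_pow_factorial (k : ℕ) {n : ℕ} [NeZero n] :
    IsIdempotentElem ((k : ZMod n) ^ n !) := by
  have h : k ^ n ! ≡ k ^ n ! * k ^ n ! [MOD n] := by
    rw [Nat.modEq_iff_dvd' (Nat.le_mul_self _), ← Nat.mul_sub_one]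
    exact Nat.dvd_pow_factorial_mul_pow_factorial_sub_one k (NeZero.pos n)
  have := (ZMod.natCast_eq_natCast_iff _ _ _).mpr h
  push_cast at this
  exact this.symm

namespace ZHat

def proj (n : ℕ+) : ZHat →+* ZMod n :=
  (Pi.evalRingHom (fun n : ℕ+ => ZMod n) n).comp ZHat.subtype

theorem castHom_proj (w : ZHat) {m n : ℕ+} (h : (n : ℕ) ∣ m) :
    ZMod.castHom h (ZMod n) (proj m w) = proj n w :=
  w.2 m n h

theorem ext_proj {a b : ZHat} (h : ∀ n, proj n a = proj n b) : a = b :=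
  Subtype.ext (funext h)

theorem isUnit_of_forall_isUnit_proj (w : ZHat) (h : ∀ n, IsUnit (proj n w)) : IsUnit w := by
  let v : (n : ℕ+) → ZMod n := fun n => ((h n).unit⁻¹ : (ZMod n)ˣ)
  have hv : v ∈ ZHat := fun m n hnm => by
    have hunit : Units.map (ZMod.castHom hnm (ZMod n)).toMonoidHom (h m).unit = (h n).unit :=
      Units.ext (castHom_proj w hnm)
    exact (Units.coe_map_inv _ _).symm.trans (by rw [hunit])
  refine IsUnit.of_mul_eq_one (⟨v, hv⟩ : ↥ZHat) (ext_proj fun n => ?_)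
  rw [map_mul, map_one]
  exact (h n).mul_val_inv

theorem isUnit_of_forall_prime (w : ZHat) (h : ∀ p : ℕ+, (p : ℕ).Prime → proj p w ≠ 0) :
    IsUnit w := by
  refine isUnit_of_forall_isUnit_proj w fun n => ?_
  rw [← ZMod.natCast_zmod_val (proj n w), ZMod.isUnit_iff_coprime]
  refine Nat.coprime_of_dvd fun p hp hpw hpn => h ⟨p, hp.pos⟩ hp ?_
  rw [← castHom_proj w (n := ⟨p, hp.pos⟩) hpn, ← ZMod.natCast_zmod_val (proj n w), map_natCast]
  exact (ZMod.natCast_eq_zero_iff _ _).mpr hpw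

def limPowFactorial (k : ℕ) : ZHat :=
  ⟨fun n => (k : ZMod n) ^ (n : ℕ)!, fun m n hnm => by
    obtain ⟨c, hc⟩ := Nat.factorial_dvd_factorial (Nat.le_of_dvd m.pos hnm)
    have hc0 : c ≠ 0 := by rintro rfl; exact Nat.factorial_ne_zero _ hc
    obtain ⟨c, rfl⟩ := Nat.exists_eq_succ_of_ne_zero hc0
    simp only [map_pow, map_natCast, hc, pow_mul]
    exact (ZMod.isIdempotentElem_natCast_pow_factorial k).pow_succ_eq c⟩

theorem proj_limPowFactorial (k : ℕ) (n : ℕ+) :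
    proj n (limPowFactorial k) = (k : ZMod n) ^ (n : ℕ)! :=
  rfl

theorem isIdempotentElem_limPowFactorial (k : ℕ) : IsIdempotentElem (limPowFactorial k) :=
  ext_proj fun n => by
    rw [map_mul, proj_limPowFactorial]
    exact ZMod.isIdempotentElem_natCast_pow_factorial k

theorem exists_units_sub_one_eq_mul_natCast {m : ℕ} (hm : 2 ∣ m) :
    ∃ z u : ZHatˣ, (z : ZHat) - 1 = u * m := by
  set e := limPowFactorial (m + 1)
  have hu : (2 * e - 1) * (2 * e - 1) = 1 := by
    linear_combination 4 * (isIdempotentElem_limPowFactorial (m + 1)).eq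
  have hz : IsUnit (1 + m * (2 * e - 1)) := isUnit_of_forall_prime _ fun p hp => by
    have := Fact.mk hp
    have he := ZMod.isIdempotentElem_natCast_pow_factorial (m + 1) (n := p)
    simp only [map_add, map_mul, map_sub, map_one, map_natCast, map_ofNat, e, proj_limPowFactorial]
    rcases eq_or_ne ((m + 1 : ℕ) : ZMod p) 0 with hk | hk
    · have hpk : (p : ℕ) ∣ m + 1 := (ZMod.natCast_eq_zero_iff _ _).mp hk
      have hp2 : ¬(p : ℕ) ∣ 2 := fun h2 =>
        hp.not_dvd_one ((Nat.dvd_add_right (h2.trans hm)).mp hpk)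
      have hm1 : (m : ZMod p) = -1 := by push_cast at hk; linear_combination hk
      rw [hk, zero_pow (Nat.factorial_ne_zero _), hm1]
      norm_num
      exact_mod_cast (ZMod.natCast_eq_zero_iff 2 p).not.mpr hp2
    · rw [(IsIdempotentElem.iff_eq_zero_or_one.mp he).resolve_left (pow_ne_zero _ hk)]
      push_cast at hk
      convert hk using 1
      ring
  exact ⟨hz.unit, ⟨_, _, hu, hu⟩, by simp; ring⟩

end ZHat

theorem AddCircle.addOrderOf_pos_rat (x : AddCircle (1 : ℚ)) : 0 < addOrderOf x := by
  induction x using QuotientAddGroup.induction_on with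
  | H q =>
    have : Fact ((0 : ℚ) < 1) := ⟨one_pos⟩
    have h := AddCircle.addOrderOf_coe_rat (p := (1 : ℚ)) (q := q)
    rw [mul_one, Rat.cast_id] at h
    exact h ▸ q.pos

theorem mod_nsmul_of_addOrderOf_dvd {A : Type*} [AddMonoid A] {x : A} {n : ℕ}
    (h : addOrderOf x ∣ n) (a : ℕ) : (a % n) • x = a • x := by
  rw [← mod_addOrderOf_nsmul x (a % n), Nat.mod_mod_of_dvd _ h, mod_addOrderOf_nsmul]

theorem zhatSmul_eq_of_addOrderOf_dvd (z : ZHat) {x : AddCircle (1 : ℚ)} {n : ℕ+}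
    (h : addOrderOf x ∣ n) : zhatSmul z x = (ZHat.proj n z).val • x := by
  let d : ℕ+ := ⟨addOrderOf x, AddCircle.addOrderOf_pos_rat x⟩
  rw [zhatSmul, dif_pos (AddCircle.addOrderOf_pos_rat x)]
  change (ZHat.proj d z).val • x = _
  rw [← ZHat.castHom_proj z (show (d : ℕ) ∣ n from h), ZMod.castHom_apply, ZMod.cast_eq_val,
    ZMod.val_natCast]
  exact mod_nsmul_of_addOrderOf_dvd dvd_rfl _

theorem zhatSmul_natCast (k : ℕ) (x : AddCircle (1 : ℚ)) : zhatSmul k x = k • x := by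
  let n : ℕ+ := ⟨addOrderOf x, AddCircle.addOrderOf_pos_rat x⟩
  rw [zhatSmul_eq_of_addOrderOf_dvd _ (n := n) dvd_rfl, map_natCast, ZMod.val_natCast]
  exact mod_nsmul_of_addOrderOf_dvd dvd_rfl k

noncomputable instance : Module ZHat (AddCircle (1 : ℚ)) where
  smul := zhatSmul
  one_smul x := by
    change zhatSmul 1 x = x
    simpa using zhatSmul_natCast 1 x
  zero_smul x := by
    change zhatSmul 0 x = 0
    simpa using zhatSmul_natCast 0 x
  add_smul a b x := by
    let n : ℕ+ := ⟨addOrderOf x, AddCircle.addOrderOf_pos_rat x⟩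
    have hn : addOrderOf x ∣ n := dvd_rfl
    change zhatSmul _ x = zhatSmul a x + zhatSmul b x
    rw [zhatSmul_eq_of_addOrderOf_dvd a hn, zhatSmul_eq_of_addOrderOf_dvd b hn,
      zhatSmul_eq_of_addOrderOf_dvd _ hn, map_add, ZMod.val_add, mod_nsmul_of_addOrderOf_dvd hn,
      add_nsmul]
  mul_smul a b x := by
    let n : ℕ+ := ⟨addOrderOf x, AddCircle.addOrderOf_pos_rat x⟩
    have hn : addOrderOf x ∣ n := dvd_rfl
    change zhatSmul _ x = zhatSmul a (zhatSmul b x)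
    rw [zhatSmul_eq_of_addOrderOf_dvd b hn,
      zhatSmul_eq_of_addOrderOf_dvd a ((addOrderOf_smul_dvd _).trans hn),
      zhatSmul_eq_of_addOrderOf_dvd _ hn, map_mul, ZMod.val_mul,
      mod_nsmul_of_addOrderOf_dvd hn, smul_smul]
  smul_add a x y := by
    let n : ℕ+ := ⟨addOrderOf x * addOrderOf y,
      Nat.mul_pos (AddCircle.addOrderOf_pos_rat x) (AddCircle.addOrderOf_pos_rat y)⟩
    have hx : addOrderOf x ∣ n := dvd_mul_right _ _
    have hy : addOrderOf y ∣ n := dvd_mul_left _ _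
    change zhatSmul a _ = zhatSmul a x + zhatSmul a y
    rw [zhatSmul_eq_of_addOrderOf_dvd a hx, zhatSmul_eq_of_addOrderOf_dvd a hy,
      zhatSmul_eq_of_addOrderOf_dvd a (n := n)
        ((AddCommute.all x y).addOrderOf_add_dvd_mul_addOrderOf), smul_add]
  smul_zero a := by
    change zhatSmul a 0 = 0
    rw [zhatSmul_eq_of_addOrderOf_dvd a (n := 1) (by simp), smul_zero]

theorem matApply_apply (M : Matrix (Fin 2) (Fin 2) ZHat) (v : Fin 2 → AddCircle (1 : ℚ))
    (i : Fin 2) : matApply M v i = ∑ j, M i j • v j :=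
  rfl

noncomputable def matApplyLinearMap (M : Matrix (Fin 2) (Fin 2) ZHat) :
    (Fin 2 → AddCircle (1 : ℚ)) →ₗ[ZHat] (Fin 2 → AddCircle (1 : ℚ)) where
  toFun := matApply M
  map_add' v w := funext fun i => by
    simp only [matApply_apply, Pi.add_apply, smul_add, Finset.sum_add_distrib]
  map_smul' c v := funext fun i => by
    simp only [matApply_apply, Pi.smul_apply, Finset.smul_sum, smul_comm c, RingHom.id_apply]

theorem matApply_scalar (z : ZHat) (v : Fin 2 → AddCircle (1 : ℚ)) :
    matApply (Matrix.scalar (Fin 2) z) v = z • v :=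
  funext fun i => by simp [matApply_apply, Matrix.scalar_apply, Matrix.diagonal_apply, ite_smul]

theorem cocycle_sub_eq_of_commute {G A : Type*} [Mul G] [AddCommGroup A] (ρ : G → A → A)
    {f : G → A} (hf : ∀ x y, f (x * y) = f x + ρ x (f y)) {g x : G} (h : g * x = x * g) :
    ρ g (f x) - f x = ρ x (f g) - f g := by
  have hgx := hf g x
  rw [h, hf x g] at hgx
  rw [sub_eq_sub_iff_add_eq_add, add_comm, ← hgx, add_comm]

theorem exists_nsmul_eq_coboundary_of_central_smul {G R A : Type*} [Mul G] [CommRing R]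
    [AddCommGroup A] [Module R A] (ρ : G → A →ₗ[R] A) {f : G → A}
    (hf : ∀ x y, f (x * y) = f x + ρ x (f y)) {g : G} (hg : ∀ x, g * x = x * g) {z : R}
    (hgz : ∀ a, ρ g a = z • a) {u : Rˣ} {m : ℕ} (hzu : z - 1 = u * m) :
    ∃ a, ∀ x, m • f x = ρ x a - a := by
  refine ⟨(↑u⁻¹ : R) • f g, fun x => ?_⟩
  calc m • f x = (↑u⁻¹ : R) • (z - 1) • f x := by
        rw [hzu, smul_smul, Units.inv_mul_cancel_left, Nat.cast_smul_eq_nsmul]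
    _ = (↑u⁻¹ : R) • (ρ x (f g) - f g) := by
        rw [sub_smul, one_smul, ← hgz, cocycle_sub_eq_of_commute (fun x => ρ x) hf (hg x)]
    _ = ρ x ((↑u⁻¹ : R) • f g) - (↑u⁻¹ : R) • f g := by
        rw [smul_sub, LinearMap.map_smul]

/-- (Sah's lemma argument.) If a profinite group `G` acts
continuously on a profinite abelian `Ẑ`-module `A` and the center of `G` contains an
element `g` acting as multiplication by a unit `z ∈ Ẑ^×` with `z − 1 = u·m` for a
positive integer `m` and a unit `u ∈ Ẑ^×`, then `m · H¹(G, A) = 0` (every continuous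
`1`-cocycle, multiplied by `m`, is a coboundary). In particular, if `G ⊆ GL₂(Ẑ)`
contains all matrices congruent to the identity modulo an even positive integer `m_E`,
and `A = (ℚ/ℤ)²` with the standard action, then `m_E · H¹(G, A) = 0`. -/
theorem stmt19 :
    (∀ (G A : Type) [Group G] [TopologicalSpace G] [IsTopologicalGroup G]
      [CompactSpace G] [TotallyDisconnectedSpace G]
      [AddCommGroup A] [TopologicalSpace A] [IsTopologicalAddGroup A]
      [CompactSpace A] [TotallyDisconnectedSpace A] [Module ZHat A]
      [DistribMulAction G A] [ContinuousSMul G A],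
      -- the `G`-action commutes with the `Ẑ`-module structure
      (∀ (x : G) (z : ZHat) (a : A), x • (z • a) = z • (x • a)) →
      ∀ m : ℕ, 0 < m →
      -- a central element acting as multiplication by a unit `z` with `z - 1 = u·m`
      (∃ g ∈ Subgroup.center G, ∃ z : (ZHat)ˣ,
        (∀ a : A, g • a = (z : ZHat) • a) ∧
        ∃ u : (ZHat)ˣ, (z : ZHat) - 1 = (u : ZHat) * (m : ZHat)) →
      -- then `m` kills continuous `H¹(G, A)`
      ∀ f : G → A, Continuous f → (∀ x y : G, f (x * y) = f x + x • f y) →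
        ∃ a : A, ∀ x : G, m • f x = x • a - a) ∧
    (∀ mE : ℕ, 0 < mE → 2 ∣ mE →
      ∀ Gs : Subgroup (Matrix (Fin 2) (Fin 2) ZHat)ˣ,
      -- `Gs` contains every matrix congruent to the identity modulo `mE`
      (∀ u : (Matrix (Fin 2) (Fin 2) ZHat)ˣ,
        (∀ i j, ∃ z : ZHat,
          (u : Matrix (Fin 2) (Fin 2) ZHat) i j - (1 : Matrix (Fin 2) (Fin 2) ZHat) i j
            = (mE : ZHat) * z) → u ∈ Gs) →
      ∀ f : ↥Gs → (Fin 2 → AddCircle (1 : ℚ)),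
        (∀ x y : ↥Gs, f (x * y) =
          f x + matApply ((x : (Matrix (Fin 2) (Fin 2) ZHat)ˣ) :
            Matrix (Fin 2) (Fin 2) ZHat) (f y)) →
        ∃ a : Fin 2 → AddCircle (1 : ℚ), ∀ x : ↥Gs,
          mE • f x = matApply ((x : (Matrix (Fin 2) (Fin 2) ZHat)ˣ) :
            Matrix (Fin 2) (Fin 2) ZHat) a - a) := by
  refine ⟨fun G A _ _ _ _ _ _ _ _ _ _ _ _ _ hcomm m _ ⟨g, hg, z, hgz, u, hzu⟩ f _ hf => ?_,
    fun mE _ hmE Gs hGs f hf => ?_⟩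
  · have : SMulCommClass G ZHat A := ⟨hcomm⟩
    exact exists_nsmul_eq_coboundary_of_central_smul (DistribSMul.toLinearMap ZHat A) hf
      (fun x => (Subgroup.mem_center_iff.mp hg x).symm) hgz hzu
  · obtain ⟨z, u, hzu⟩ := ZHat.exists_units_sub_one_eq_mul_natCast hmE
    have hmem : Units.map (Matrix.scalar (Fin 2)).toMonoidHom z ∈ Gs := hGs _ fun i j =>
      ⟨u * (1 : Matrix (Fin 2) (Fin 2) ZHat) i j, by
        rcases eq_or_ne i j with rfl | hij
        · simp [hzu, mul_comm]
        · simp [hij]⟩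
    exact exists_nsmul_eq_coboundary_of_central_smul
      (fun x : Gs => matApplyLinearMap (x : (Matrix (Fin 2) (Fin 2) ZHat)ˣ)) hf (g := ⟨_, hmem⟩)
      (fun x => Subtype.ext (Units.ext (Matrix.scalar_commute _ (Commute.all _) _)))
      (matApply_scalar z) hzu
end
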